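/- Let h: ℝ^d → ℝ be μ-strongly convex and L-smooth with 0 ≤ μ ≤ L < ∞, let γ > 0, η > 0, and let x⋆, u⋆ ∈ ℝ^d with u⋆ = ∇h(x⋆). Given x̂, û ∈ ℝ^d, let p = x̂ + γη û, y = prox_{γη h}(p), and u = ∇h(y), so that y + γη u = p. Then (1 + 2γη μL/(L+μ))‖y - x⋆‖² + (γ²η² + 2γη/(L+μ))‖u - u⋆‖² ≤ ‖x̂ - x⋆ + γη(û - u⋆)‖². -/

import Mathlib

open scoped RealInnerProductSpace
set_option maxHeartbeats 1000000

section Aux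
set_option linter.unusedSectionVars false
variable {E : Type*} [NormedAddCommGroup E] [InnerProductSpace ℝ E] [CompleteSpace E]

lemma aux_dir (f : E → ℝ) (gf : E → E) (hgrad : ∀ x, HasGradientAt f (gf x) x)
    (x v : E) (t : ℝ) :
    HasDerivAt (fun s : ℝ => f (x + s • v)) ⟪gf (x + t • v), v⟫ t := by
  have line : HasDerivAt (fun s : ℝ => x + s • v) v t := by
    simpa using (((hasDerivAt_id t).smul_const v).const_add x)
  have := (hgrad (x + t • v)).hasFDerivAt.comp_hasDerivAt t line
  simpa [InnerProductSpace.toDual_apply_apply, Function.comp_def] using this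

lemma aux_sq_dir (μ : ℝ) (x v : E) (t : ℝ) :
    HasDerivAt (fun s : ℝ => μ / 2 * ‖x + s • v‖ ^ 2) (μ * ⟪x + t • v, v⟫) t := by
  have heq : (fun s : ℝ => μ / 2 * ‖x + s • v‖ ^ 2)
      = fun s : ℝ => μ / 2 * (‖x‖ ^ 2 + 2 * ⟪x, v⟫ * s + ‖v‖ ^ 2 * s ^ 2) := by
    funext s
    rw [norm_add_sq_real, real_inner_smul_right, norm_smul]
    ring_nf
    rw [Real.norm_eq_abs, sq_abs]
  rw [heq]
  have : HasDerivAt (fun s : ℝ => ‖x‖ ^ 2 + 2 * ⟪x, v⟫ * s + ‖v‖ ^ 2 * s ^ 2)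
      (0 + 2 * ⟪x, v⟫ * 1 + ‖v‖ ^ 2 * (2 * t ^ 1)) t := by
    exact ((hasDerivAt_const t _).add (((hasDerivAt_id t)).const_mul _)).add
      ((hasDerivAt_pow 2 t).const_mul _)
  have h2 := this.const_mul (μ / 2)
  refine h2.congr_deriv ?_
  rw [inner_add_left, real_inner_smul_left, real_inner_self_eq_norm_sq]
  ring

lemma aux_subgrad (f : E → ℝ) (gf : E → E) (hconv : ConvexOn ℝ Set.univ f)
    (hdir : ∀ x v (t : ℝ), HasDerivAt (fun s : ℝ => f (x + s • v)) ⟪gf (x + t • v), v⟫ t)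
    (x z : E) : f x + ⟪gf x, z - x⟫ ≤ f z := by
  set v := z - x with hv
  have hψconv : ConvexOn ℝ Set.univ (fun t : ℝ => f (x + t • v)) := by
    have heq : (fun t : ℝ => f (x + t • v)) = f ∘ (AffineMap.lineMap x (x + v)) := by
      funext t
      simp [AffineMap.lineMap_apply, add_comm]
    rw [heq]
    simpa using hconv.comp_affineMap (AffineMap.lineMap x (x + v))
  have hd0 : HasDerivAt (fun s : ℝ => f (x + s • v)) ⟪gf x, v⟫ 0 := by
    simpa using hdir x v 0
  have := hψconv.le_slope_of_hasDerivAt (Set.mem_univ 0) (Set.mem_univ 1) one_pos hd0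
  rw [slope_def_field] at this
  simp only [zero_smul, add_zero, one_smul] at this
  have hxz : x + v = z := by rw [hv]; abel
  rw [hxz] at this
  simp only [div_one, sub_zero] at this
  linarith [this]

lemma aux_descent (f : E → ℝ) (gf : E → E) (K : ℝ)
    (hdir : ∀ x v (t : ℝ), HasDerivAt (fun s : ℝ => f (x + s • v)) ⟪gf (x + t • v), v⟫ t)
    (hLip : ∀ x y, ‖gf x - gf y‖ ≤ K * ‖x - y‖) (x z : E) :
    f z ≤ f x + ⟪gf x, z - x⟫ + K / 2 * ‖z - x‖ ^ 2 := by
  set v := z - x with hv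
  set F : ℝ → ℝ := fun t => f (x + t • v) - ⟪gf x, v⟫ * t - K / 2 * ‖v‖ ^ 2 * t ^ 2 with hF
  have hFd : ∀ t : ℝ, HasDerivAt F
      (⟪gf (x + t • v), v⟫ - ⟪gf x, v⟫ * 1 - K / 2 * ‖v‖ ^ 2 * (↑2 * t ^ 1)) t := by
    intro t
    exact ((hdir x v t).sub ((hasDerivAt_id t).const_mul _)).sub
      ((hasDerivAt_pow 2 t).const_mul _)
  have hanti : AntitoneOn F (Set.Icc 0 1) := by
    apply antitoneOn_of_deriv_nonpos (convex_Icc 0 1)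
    · exact fun t _ => (hFd t).continuousAt.continuousWithinAt
    · exact fun t _ => (hFd t).differentiableAt.differentiableWithinAt
    · rw [interior_Icc]
      rintro t ⟨ht0, ht1⟩
      rw [(hFd t).deriv]
      have h1 : ⟪gf (x + t • v) - gf x, v⟫ ≤ ‖gf (x + t • v) - gf x‖ * ‖v‖ :=
        real_inner_le_norm _ _
      have h2 : ‖gf (x + t • v) - gf x‖ ≤ K * (t * ‖v‖) := by
        have := hLip (x + t • v) x
        simpa [norm_smul, abs_of_pos ht0, mul_assoc] using this
      have h3 : ⟪gf (x + t • v) - gf x, v⟫ = ⟪gf (x + t • v), v⟫ - ⟪gf x, v⟫ := by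
        rw [inner_sub_left]
      nlinarith [norm_nonneg v, mul_le_mul_of_nonneg_right h2 (norm_nonneg v)]
  have h01 := hanti (Set.mem_Icc.2 ⟨le_refl 0, zero_le_one⟩)
    (Set.mem_Icc.2 ⟨zero_le_one, le_refl 1⟩) zero_le_one
  have hxz : x + v = z := by rw [hv]; abel
  simp only [hF, zero_smul, add_zero, one_smul, hxz] at h01
  nlinarith [h01]

lemma aux_coco (f : E → ℝ) (gf : E → E) (K : ℝ) (hK : 0 < K)
    (hconv : ConvexOn ℝ Set.univ f)
    (hdir : ∀ x v (t : ℝ), HasDerivAt (fun s : ℝ => f (x + s • v)) ⟪gf (x + t • v), v⟫ t)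
    (hdesc : ∀ a b : E, f b ≤ f a + ⟪gf a, b - a⟫ + K / 2 * ‖b - a‖ ^ 2)
    (x y : E) : (1 / K) * ‖gf x - gf y‖ ^ 2 ≤ ⟪gf x - gf y, x - y⟫ := by
  have key : ∀ a b : E, f a + ⟪gf a, b - a⟫ + 1 / (2 * K) * ‖gf b - gf a‖ ^ 2 ≤ f b := by
    intro a b
    set G := gf b - gf a with hG
    set w := b - (1 / K) • G with hw
    have h1 := aux_subgrad f gf hconv hdir a w
    have h2 := hdesc b w
    have e1 : w - a = (b - a) - (1 / K) • G := by rw [hw]; abel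
    have e2 : w - b = -((1 / K) • G) := by rw [hw]; abel
    have i1 : ⟪gf a, w - a⟫ = ⟪gf a, b - a⟫ - (1 / K) * ⟪gf a, G⟫ := by
      rw [e1, inner_sub_right, inner_smul_right]
    have i2 : ⟪gf b, w - b⟫ = -((1 / K) * ⟪gf b, G⟫) := by
      rw [e2, inner_neg_right, inner_smul_right]
    have i3 : ‖w - b‖ ^ 2 = (1 / K) ^ 2 * ‖G‖ ^ 2 := by
      rw [e2, norm_neg, norm_smul]
      simp [abs_of_pos (one_div_pos.2 hK), mul_pow]
    have i4 : ⟪gf b, G⟫ - ⟪gf a, G⟫ = ‖G‖ ^ 2 := by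
      rw [← inner_sub_left, ← hG, real_inner_self_eq_norm_sq]
    have hK' : K ≠ 0 := ne_of_gt hK
    rw [i1] at h1
    rw [i2, i3] at h2
    have : f a + ⟪gf a, b - a⟫ ≤ f b - (1 / K) * (⟪gf b, G⟫ - ⟪gf a, G⟫)
        + K / 2 * ((1 / K) ^ 2 * ‖G‖ ^ 2) := by linarith
    rw [i4] at this
    have e5 : K / 2 * ((1 / K) ^ 2 * ‖G‖ ^ 2) = 1 / (2 * K) * ‖G‖ ^ 2 := by field_simp
    rw [e5] at this
    have e6 : (1 / K) * ‖G‖ ^ 2 = 2 * (1 / (2 * K) * ‖G‖ ^ 2) := by field_simp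
    linarith [this, e6 ▸ this]
  have k1 := key x y
  have k2 := key y x
  have j1 : ⟪gf x, y - x⟫ + ⟪gf y, x - y⟫ = -⟪gf x - gf y, x - y⟫ := by
    rw [inner_sub_left]
    have : ⟪gf x, y - x⟫ = -⟪gf x, x - y⟫ := by
      rw [← inner_neg_right]; congr 1; abel
    rw [this]; ring
  have j2 : ‖gf y - gf x‖ = ‖gf x - gf y‖ := norm_sub_rev _ _
  rw [j2] at k1
  have hK' : K ≠ 0 := ne_of_gt hK
  have e7 : (1 / K) * ‖gf x - gf y‖ ^ 2 = 2 * (1 / (2 * K) * ‖gf x - gf y‖ ^ 2) := by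
    field_simp
  linarith [k1, k2, j1, e7]

end Aux

theorem stmt6 (d : ℕ) (h : EuclideanSpace ℝ (Fin d) → ℝ)
    (g : EuclideanSpace ℝ (Fin d) → EuclideanSpace ℝ (Fin d))
    (hgrad : ∀ x, HasGradientAt h (g x) x)
    (hconv : ConvexOn ℝ Set.univ h)
    (L μ γ η : ℝ) (hμ : 0 ≤ μ) (hμL : μ ≤ L) (hγ : 0 < γ) (hη : 0 < η)
    (hLip : ∀ x y, ‖g x - g y‖ ≤ L * ‖x - y‖)
    (hsc : ConvexOn ℝ Set.univ (fun x => h x - μ / 2 * ‖x‖ ^ 2))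
    (xs us xhat uhat p y u : EuclideanSpace ℝ (Fin d))
    (hus : us = g xs)
    (hp : p = xhat + (γ * η) • uhat)
    (hy : y + (γ * η) • g y = p)
    (hu : u = g y) :
    (1 + 2 * γ * η * μ * L / (L + μ)) * ‖y - xs‖ ^ 2
      + (γ ^ 2 * η ^ 2 + 2 * γ * η / (L + μ)) * ‖u - us‖ ^ 2
      ≤ ‖xhat - xs + (γ * η) • (uhat - us)‖ ^ 2 := by
  have ha : 0 < γ * η := mul_pos hγ hη
  have h0 : xhat + (γ * η) • uhat = y + (γ * η) • u := by
    rw [hu, hy, hp]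
  have hvec : xhat - xs + (γ * η) • (uhat - us)
      = (y - xs) + (γ * η) • (u - us) := by
    linear_combination (norm := module) h0
  rw [hvec, norm_add_sq_real, real_inner_smul_right, norm_smul]
  have hnsm : (‖γ * η‖ * ‖u - us‖) ^ 2 = (γ * η) ^ 2 * ‖u - us‖ ^ 2 := by
    rw [Real.norm_eq_abs, mul_pow, sq_abs]
  rw [hnsm]
  have hL0 : 0 ≤ L := le_trans hμ hμL
  have hsum : 0 ≤ L + μ := by linarith
  rcases eq_or_lt_of_le hsum with heq | hpos
  · -- L + μ = 0, so L = μ = 0 and g is constant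
    have hL : L = 0 := by linarith
    have hμ0 : μ = 0 := by linarith
    have hG : u - us = 0 := by
      rw [hu, hus, sub_eq_zero]
      have := hLip y xs
      rw [hL, zero_mul] at this
      have h2 : ‖g y - g xs‖ = 0 := le_antisymm this (norm_nonneg _)
      have := norm_sub_eq_zero_iff.mp h2
      exact this
    rw [hG]
    rw [← heq]
    simp [hμ0]
  · -- main case
    set Δ := y - xs with hΔ
    set G := u - us with hG
    have hGg : G = g y - g xs := by rw [hG, hu, hus]
    have hdirh := aux_dir h g hgrad
    have hφdir : ∀ (x v : EuclideanSpace ℝ (Fin d)) (t : ℝ),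
        HasDerivAt (fun s : ℝ => (fun x => h x - μ / 2 * ‖x‖ ^ 2) (x + s • v))
          ⟪(fun z => g z - μ • z) (x + t • v), v⟫ t := by
      intro x v t
      have h1 := hdirh x v t
      have h2 := aux_sq_dir μ x v t
      have h3 := h1.sub h2
      refine h3.congr_deriv ?_
      simp only [inner_sub_left, real_inner_smul_left]
    -- key coercivity inequality
    have key : μ * L * ‖Δ‖ ^ 2 + ‖G‖ ^ 2 ≤ (L + μ) * ⟪G, Δ⟫ := by
      rw [hGg, hΔ]
      have hGle : ‖g y - g xs‖ ^ 2 ≤ L ^ 2 * ‖y - xs‖ ^ 2 := by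
        nlinarith [hLip y xs, norm_nonneg (g y - g xs), norm_nonneg (y - xs)]
      rcases eq_or_lt_of_le hμL with hμeq | hμlt
      · -- μ = L : use strong monotonicity from convexity of φ
        have s1 := aux_subgrad (fun x => h x - μ / 2 * ‖x‖ ^ 2) (fun z => g z - μ • z)
          hsc hφdir y xs
        have s2 := aux_subgrad (fun x => h x - μ / 2 * ‖x‖ ^ 2) (fun z => g z - μ • z)
          hsc hφdir xs y
        have e1 : ⟪g xs - μ • xs, y - xs⟫ = -⟪g xs - μ • xs, xs - y⟫ := by
          rw [show y - xs = -(xs - y) by abel, inner_neg_right]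
        rw [e1] at s2
        have hmono0 : ⟪(g y - μ • y) - (g xs - μ • xs), xs - y⟫ ≤ 0 := by
          rw [inner_sub_left]; linarith
        have e2 : (g y - μ • y) - (g xs - μ • xs) = (g y - g xs) - μ • (y - xs) := by
          module
        rw [e2, show xs - y = -(y - xs) by abel, inner_neg_right] at hmono0
        rw [inner_sub_left, real_inner_smul_left, real_inner_self_eq_norm_sq] at hmono0
        have hmono : μ * ‖y - xs‖ ^ 2 ≤ ⟪g y - g xs, y - xs⟫ := by linarith
        have t1 : μ * (μ * ‖y - xs‖ ^ 2) ≤ μ * ⟪g y - g xs, y - xs⟫ :=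
          mul_le_mul_of_nonneg_left hmono hμ
        subst hμeq
        linarith [t1, hGle]
      · -- μ < L : cocoercivity of φ with constant L - μ
        have hK : (0:ℝ) < L - μ := by linarith
        have hφdesc : ∀ a b : EuclideanSpace ℝ (Fin d),
            (fun x => h x - μ / 2 * ‖x‖ ^ 2) b ≤ (fun x => h x - μ / 2 * ‖x‖ ^ 2) a
              + ⟪(fun z => g z - μ • z) a, b - a⟫ + (L - μ) / 2 * ‖b - a‖ ^ 2 := by
          intro a b
          simp only []
          have hd := aux_descent h g L hdirh hLip a b
          have hn : ‖b‖ ^ 2 = ‖a‖ ^ 2 + 2 * ⟪a, b - a⟫ + ‖b - a‖ ^ 2 := by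
            have hh := norm_add_sq_real a (b - a)
            rw [add_sub_cancel] at hh
            exact hh
          rw [inner_sub_left, real_inner_smul_left]
          have hn2 : μ / 2 * ‖b‖ ^ 2
              = μ / 2 * ‖a‖ ^ 2 + μ * ⟪a, b - a⟫ + μ / 2 * ‖b - a‖ ^ 2 := by
            rw [hn]; ring
          linarith
        have coco := aux_coco (fun x => h x - μ / 2 * ‖x‖ ^ 2) (fun z => g z - μ • z)
          (L - μ) hK hsc hφdir hφdesc y xs
        have e2 : (g y - μ • y) - (g xs - μ • xs) = (g y - g xs) - μ • (y - xs) := by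
          module
        rw [e2] at coco
        have i1 : ⟪(g y - g xs) - μ • (y - xs), y - xs⟫
            = ⟪g y - g xs, y - xs⟫ - μ * ‖y - xs‖ ^ 2 := by
          rw [inner_sub_left, real_inner_smul_left, real_inner_self_eq_norm_sq]
        have i2 : ‖(g y - g xs) - μ • (y - xs)‖ ^ 2
            = ‖g y - g xs‖ ^ 2 - 2 * μ * ⟪g y - g xs, y - xs⟫ + μ ^ 2 * ‖y - xs‖ ^ 2 := by
          rw [norm_sub_sq_real, real_inner_smul_right, norm_smul, Real.norm_eq_abs,
            mul_pow, sq_abs]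
          ring
        rw [i1, i2] at coco
        rw [one_div, inv_mul_eq_div, div_le_iff₀ hK] at coco
        linarith [coco]
    have hcomm : ⟪Δ, G⟫ = ⟪G, Δ⟫ := real_inner_comm _ _
    rw [hcomm]
    have hD : 0 ≤ ‖Δ‖ ^ 2 := sq_nonneg _
    have hN : 0 ≤ ‖G‖ ^ 2 := sq_nonneg _
    have key2 : 2 * γ * η * μ * L / (L + μ) * ‖Δ‖ ^ 2 + 2 * γ * η / (L + μ) * ‖G‖ ^ 2
        ≤ 2 * (γ * η * ⟪G, Δ⟫) := by
      rw [div_mul_eq_mul_div, div_mul_eq_mul_div, ← add_div, div_le_iff₀ hpos]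
      nlinarith [mul_le_mul_of_nonneg_left key (le_of_lt (by linarith : (0:ℝ) < 2 * γ * η))]
    nlinarith [key2]
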